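/- Preparation-measurement tradeoff: c_inc(A,B) + c_prep(A,B) ≤ log|X| + log|Y|, where c_prep(A,B) = inf_ρ [H(A^ρ) + H(B^ρ)] is the entropic preparation uncertainty coefficient. -/

import Mathlib

open scoped BigOperators Classical ComplexOrder

/-- Relative entropy (base 2) of discrete densities, `⊤` if `supp p ⊄ supp q`. -/
noncomputable def relEnt {X : Type*} [Fintype X] (p q : X → ℝ) : EReal :=
  if ∀ x, 0 < p x → 0 < q x then
    ((∑ x, if 0 < p x then p x * Real.logb 2 (p x / q x) else 0 : ℝ) : EReal)
  else ⊤

/-- A density operator (state) on `ℂⁿ`. -/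
def IsState {n : ℕ} (ρ : Matrix (Fin n) (Fin n) ℂ) : Prop :=
  ρ.PosSemidef ∧ ρ.trace = 1

/-- A discrete observable (POVM) with outcomes in the finite set `X`. -/
def IsPOVM {n : ℕ} {X : Type*} [Fintype X] (A : X → Matrix (Fin n) (Fin n) ℂ) : Prop :=
  (∀ x, (A x).PosSemidef) ∧ ∑ x, A x = 1

/-- Outcome probability density of the observable `A` in the state `ρ`. -/
noncomputable def probOf {n : ℕ} {X : Type*} [Fintype X]
    (A : X → Matrix (Fin n) (Fin n) ℂ) (ρ : Matrix (Fin n) (Fin n) ℂ) :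
    X → ℝ := fun x => ((ρ * A x).trace).re


/-- Shannon entropy (base 2) of a discrete density. -/
noncomputable def shannon {X : Type*} [Fintype X] (p : X → ℝ) : ℝ :=
  -∑ x, p x * Real.logb 2 (p x)


/-! The trivial bi-observable `U x y = (|X| |Y|)⁻¹ • 1` has the uniform marginals in every
state, and the relative entropy of a density from the uniform one is `log |X|` minus its Shannon
entropy. Hence the summed divergence of `U` at `ρ` is `log |X| + log |Y| - H(A^ρ) - H(B^ρ)`, whose
supremum over states is `log |X| + log |Y| - c_prep(A, B)`. -/

open Finset

section Probability

variable {X : Type*} [Fintype X]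

lemma sum_const_inv_card [Nonempty X] : ∑ _x : X, (Fintype.card X : ℝ)⁻¹ = 1 := by
  rw [sum_const, card_univ, nsmul_eq_mul, mul_inv_cancel₀ (by positivity)]

lemma shannon_nonneg {p : X → ℝ} (hp : ∀ x, 0 ≤ p x) (hsum : ∑ x, p x = 1) : 0 ≤ shannon p := by
  rw [shannon, neg_nonneg]
  refine sum_nonpos fun x _ => mul_nonpos_of_nonneg_of_nonpos (hp x) ?_
  refine Real.logb_nonpos one_lt_two (hp x) ?_
  exact hsum ▸ single_le_sum (fun i _ => hp i) (mem_univ x)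

lemma relEnt_const_inv_card [Nonempty X] {p : X → ℝ} (hp : ∀ x, 0 ≤ p x)
    (hsum : ∑ x, p x = 1) :
    relEnt p (fun _ => (Fintype.card X : ℝ)⁻¹) =
      ((Real.logb 2 (Fintype.card X) - shannon p : ℝ) : EReal) := by
  have hcard : (Fintype.card X : ℝ) ≠ 0 := by positivity
  have hterm : ∀ x, (if 0 < p x then p x * Real.logb 2 (p x / (Fintype.card X : ℝ)⁻¹) else 0) =
      p x * Real.logb 2 (p x) + p x * Real.logb 2 (Fintype.card X) := by
    intro x
    rcases (hp x).lt_or_eq with hpos | hzero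
    · rw [if_pos hpos, div_inv_eq_mul, Real.logb_mul hpos.ne' hcard, mul_add]
    · simp [← hzero]
  rw [relEnt, if_pos fun x _ => by positivity, sum_congr rfl fun x _ => hterm x,
    sum_add_distrib, ← sum_mul, hsum, one_mul, shannon, EReal.coe_eq_coe_iff]
  ring

end Probability

section Observables

variable {n : ℕ} {X Y : Type*} [Fintype X] [Fintype Y]

lemma Matrix.PosSemidef.trace_mul_nonneg {𝕜 m : Type*} [RCLike 𝕜] [Fintype m]
    {ρ A : Matrix m m 𝕜} (hρ : ρ.PosSemidef) (hA : A.PosSemidef) : 0 ≤ (ρ * A).trace := by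
  open scoped MatrixOrder in
  obtain ⟨B, rfl⟩ := CStarAlgebra.nonneg_iff_eq_star_mul_self.mp hA.nonneg
  rw [← mul_assoc, Matrix.trace_mul_comm, ← mul_assoc]
  exact (hρ.mul_mul_conjTranspose_same B).trace_nonneg

lemma probOf_nonneg {A : X → Matrix (Fin n) (Fin n) ℂ} {ρ : Matrix (Fin n) (Fin n) ℂ}
    (hA : IsPOVM A) (hρ : IsState ρ) (x : X) : 0 ≤ probOf A ρ x :=
  (Complex.nonneg_iff.mp (hρ.1.trace_mul_nonneg (hA.1 x))).1

lemma sum_probOf {A : X → Matrix (Fin n) (Fin n) ℂ} {ρ : Matrix (Fin n) (Fin n) ℂ}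
    (hA : IsPOVM A) (hρ : IsState ρ) : ∑ x, probOf A ρ x = 1 := by
  simp only [probOf, ← Complex.re_sum, ← Matrix.trace_sum, ← mul_sum, hA.2, mul_one, hρ.2,
    Complex.one_re]

lemma probOf_smul_one (p : X → ℝ) {ρ : Matrix (Fin n) (Fin n) ℂ} (hρ : ρ.trace = 1) :
    probOf (fun x => p x • (1 : Matrix (Fin n) (Fin n) ℂ)) ρ = p := by
  ext x
  simp [probOf, hρ]

lemma isPOVM_smul_one {p : X → ℝ} (hp : ∀ x, 0 ≤ p x) (hsum : ∑ x, p x = 1) :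
    IsPOVM (fun x => p x • (1 : Matrix (Fin n) (Fin n) ℂ)) :=
  ⟨fun x => Matrix.PosSemidef.one.smul (hp x), by rw [← sum_smul, hsum, one_smul]⟩

variable (n X Y)

noncomputable def uniformBiObs : X → Y → Matrix (Fin n) (Fin n) ℂ :=
  fun _ _ => ((Fintype.card X : ℝ)⁻¹ * (Fintype.card Y : ℝ)⁻¹) • 1

variable {n X Y}

lemma isPOVM_uniformBiObs [Nonempty X] [Nonempty Y] :
    IsPOVM (fun xy : X × Y => uniformBiObs n X Y xy.1 xy.2) := by
  refine isPOVM_smul_one (fun _ => by positivity) ?_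
  rw [Fintype.sum_prod_type, ← sum_mul_sum, sum_const_inv_card, sum_const_inv_card, one_mul]

lemma sum_uniformBiObs_right [Nonempty Y] :
    (fun x => ∑ y, uniformBiObs n X Y x y) = fun _ => (Fintype.card X : ℝ)⁻¹ • 1 := by
  ext1 x
  simp only [uniformBiObs]
  rw [← sum_smul, ← mul_sum, sum_const_inv_card, mul_one]

lemma sum_uniformBiObs_left [Nonempty X] :
    (fun y => ∑ x, uniformBiObs n X Y x y) = fun _ => (Fintype.card Y : ℝ)⁻¹ • 1 := by
  ext1 y
  simp only [uniformBiObs]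
  rw [← sum_smul, ← sum_mul, sum_const_inv_card, one_mul]

lemma relEnt_add_relEnt_uniformBiObs [Nonempty X] [Nonempty Y] {A : X → Matrix (Fin n) (Fin n) ℂ}
    {B : Y → Matrix (Fin n) (Fin n) ℂ} (hA : IsPOVM A) (hB : IsPOVM B)
    {ρ : Matrix (Fin n) (Fin n) ℂ} (hρ : IsState ρ) :
    relEnt (probOf A ρ) (probOf (fun x => ∑ y, uniformBiObs n X Y x y) ρ) +
        relEnt (probOf B ρ) (probOf (fun y => ∑ x, uniformBiObs n X Y x y) ρ) =
      ((Real.logb 2 (Fintype.card X) + Real.logb 2 (Fintype.card Y) -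
        (shannon (probOf A ρ) + shannon (probOf B ρ)) : ℝ) : EReal) := by
  rw [sum_uniformBiObs_right, sum_uniformBiObs_left,
    probOf_smul_one _ hρ.2, probOf_smul_one _ hρ.2,
    relEnt_const_inv_card (probOf_nonneg hA hρ) (sum_probOf hA hρ),
    relEnt_const_inv_card (probOf_nonneg hB hρ) (sum_probOf hB hρ), ← EReal.coe_add]
  congr 1
  ring

end Observables

theorem stmt11_general {n : ℕ} {X Y : Type*} [Fintype X] [Fintype Y]
    [Nonempty X] [Nonempty Y]
    (A : X → Matrix (Fin n) (Fin n) ℂ) (B : Y → Matrix (Fin n) (Fin n) ℂ)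
    (hA : IsPOVM A) (hB : IsPOVM B) :
    (⨅ M : {M : X → Y → Matrix (Fin n) (Fin n) ℂ //
        IsPOVM (fun xy : X × Y => M xy.1 xy.2)},
      ⨆ ρ : {ρ : Matrix (Fin n) (Fin n) ℂ // IsState ρ},
        relEnt (probOf A ρ.1) (probOf (fun x => ∑ y, M.1 x y) ρ.1) +
          relEnt (probOf B ρ.1) (probOf (fun y => ∑ x, M.1 x y) ρ.1)) +
      ((⨅ ρ : {ρ : Matrix (Fin n) (Fin n) ℂ // IsState ρ},
          (shannon (probOf A ρ.1) + shannon (probOf B ρ.1)) : ℝ) : EReal) ≤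
      ((Real.logb 2 (Fintype.card X) + Real.logb 2 (Fintype.card Y) : ℝ) : EReal) := by
  set H : {ρ : Matrix (Fin n) (Fin n) ℂ // IsState ρ} → ℝ :=
    fun ρ => shannon (probOf A ρ.1) + shannon (probOf B ρ.1)
  set L := Real.logb 2 (Fintype.card X) + Real.logb 2 (Fintype.card Y)
  have hHbdd : BddBelow (Set.range H) := ⟨0, Set.forall_mem_range.mpr fun ρ =>
    add_nonneg (shannon_nonneg (probOf_nonneg hA ρ.2) (sum_probOf hA ρ.2))
      (shannon_nonneg (probOf_nonneg hB ρ.2) (sum_probOf hB ρ.2))⟩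
  rw [← sub_add_cancel L (⨅ ρ, H ρ), EReal.coe_add]
  refine add_le_add_left ?_ _
  refine iInf_le_of_le ⟨uniformBiObs n X Y, isPOVM_uniformBiObs⟩ (iSup_le fun ρ => ?_)
  rw [relEnt_add_relEnt_uniformBiObs hA hB ρ.2, EReal.coe_le_coe_iff]
  exact sub_le_sub_left (ciInf_le hHbdd ρ) L

/-- Preparation-measurement tradeoff:
`c_inc(A,B) + c_prep(A,B) ≤ log|X| + log|Y|`, where
`c_prep(A,B) = inf_ρ [H(A^ρ) + H(B^ρ)]`. -/
theorem stmt11 {n : ℕ} [NeZero n] {X Y : Type*} [Fintype X] [Fintype Y]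
    [Nonempty X] [Nonempty Y]
    (A : X → Matrix (Fin n) (Fin n) ℂ) (B : Y → Matrix (Fin n) (Fin n) ℂ)
    (hA : IsPOVM A) (hB : IsPOVM B) :
    (⨅ M : {M : X → Y → Matrix (Fin n) (Fin n) ℂ //
        IsPOVM (fun xy : X × Y => M xy.1 xy.2)},
      ⨆ ρ : {ρ : Matrix (Fin n) (Fin n) ℂ // IsState ρ},
        relEnt (probOf A ρ.1) (probOf (fun x => ∑ y, M.1 x y) ρ.1) +
          relEnt (probOf B ρ.1) (probOf (fun y => ∑ x, M.1 x y) ρ.1)) +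
      ((⨅ ρ : {ρ : Matrix (Fin n) (Fin n) ℂ // IsState ρ},
          (shannon (probOf A ρ.1) + shannon (probOf B ρ.1)) : ℝ) : EReal) ≤
      ((Real.logb 2 (Fintype.card X) + Real.logb 2 (Fintype.card Y) : ℝ) : EReal) :=
  stmt11_general A B hA hB
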